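/- arXiv:2002.00399 — 2 statements merged into one kernel-verified Lean document; each statement's English description precedes it below -/
import Mathlib

section
/- Let a, b ∈ ℝ and let q₁, q₂, p₁, p₂ : I → ℝ be differentiable functions on an open interval I satisfying the 2-peakon ODE system with parameters a, b, and suppose q₂(t) > q₁(t) for all t ∈ I. Then for all t ∈ I, (p₂² − p₁²)′(t) = 2(b − 2)·p₁(t)p₂(t)·(p₁(t)² + p₂(t)²)·e^{−(q₂(t) − q₁(t))} + 4(b − 2)·p₁(t)²p₂(t)²·e^{−2(q₂(t) − q₁(t))}. -/
open Real Set

/-- The 2-peakon ODE system with parameters `a`, `b`, holding at every point of the set `I`.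
Here `Real.sign` plays the role of the sign function `sgn`. -/
def PeakonODE (a b : ℝ) (I : Set ℝ) (q₁ q₂ p₁ p₂ : ℝ → ℝ) : Prop :=
  ∀ t ∈ I,
    HasDerivAt q₁ ((1 - a) * p₁ t ^ 2 + 2 * p₁ t * p₂ t * Real.exp (-|q₁ t - q₂ t|)
      + (1 - 3 * a) * p₂ t ^ 2 * Real.exp (-(2 * |q₁ t - q₂ t|))) t ∧
    HasDerivAt q₂ ((1 - a) * p₂ t ^ 2 + 2 * p₁ t * p₂ t * Real.exp (-|q₁ t - q₂ t|)
      + (1 - 3 * a) * p₁ t ^ 2 * Real.exp (-(2 * |q₁ t - q₂ t|))) t ∧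
    HasDerivAt p₁ ((2 - b) * Real.sign (q₂ t - q₁ t) * p₁ t * p₂ t * Real.exp (-|q₁ t - q₂ t|)
      * (p₁ t + p₂ t * Real.exp (-|q₁ t - q₂ t|))) t ∧
    HasDerivAt p₂ ((2 - b) * Real.sign (q₁ t - q₂ t) * p₁ t * p₂ t * Real.exp (-|q₁ t - q₂ t|)
      * (p₁ t * Real.exp (-|q₁ t - q₂ t|) + p₂ t)) t

theorem p_deriv (a b t₁ t₂ : ℝ) (q₁ q₂ p₁ p₂ : ℝ → ℝ)
    (hsys : PeakonODE a b (Set.Ioo t₁ t₂) q₁ q₂ p₁ p₂)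
    (horder : ∀ t ∈ Set.Ioo t₁ t₂, q₁ t < q₂ t) :
    ∀ t ∈ Set.Ioo t₁ t₂,
      HasDerivAt (fun s => p₂ s ^ 2 - p₁ s ^ 2)
        (2 * (b - 2) * p₁ t * p₂ t * (p₁ t ^ 2 + p₂ t ^ 2) * Real.exp (-(q₂ t - q₁ t))
          + 4 * (b - 2) * p₁ t ^ 2 * p₂ t ^ 2 * Real.exp (-(2 * (q₂ t - q₁ t)))) t := by
  intro t ht
  obtain ⟨_, _, hp1, hp2⟩ := hsys t ht
  have hlt := horder t ht
  have habs : |q₁ t - q₂ t| = q₂ t - q₁ t := by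
    rw [abs_of_neg (by linarith)]; ring
  have hs1 : Real.sign (q₂ t - q₁ t) = 1 := Real.sign_of_pos (by linarith)
  have hs2 : Real.sign (q₁ t - q₂ t) = -1 := Real.sign_of_neg (by linarith)
  rw [habs, hs1] at hp1
  rw [habs, hs2] at hp2
  have h : HasDerivAt (fun s => p₂ s ^ 2 - p₁ s ^ 2) _ t := (hp2.pow 2).sub (hp1.pow 2)
  convert h using 1
  have hexp : Real.exp (-(2 * (q₂ t - q₁ t))) = Real.exp (-(q₂ t - q₁ t)) ^ 2 := by
    rw [← Real.exp_nat_mul]; ring_nf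
  rw [hexp]; ring
end

section
/- Let s < 3/2, T > 0, and let p₁, p₂, q₁, q₂ : [0, T) → ℝ be bounded functions such that, as t → T from below, p₁(t) → p₁*, p₂(t) → p₂*, q₁(t) → q*, and q₂(t) → q* for some real numbers p₁*, p₂*, q*. Set p* = p₁* + p₂*. Then lim_{t → T⁻} ∫_ℝ (1 + ξ²)^{s−2} · |p₁(t)e^{−iξq₁(t)} + p₂(t)e^{−iξq₂(t)} − p*·e^{−iξq*}|² dξ = 0. -/
open Real Complex MeasureTheory Filter Topology

theorem collision_limit (s T : ℝ) (hs : s < 3 / 2) (hT : 0 < T)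
    (p₁ p₂ q₁ q₂ : ℝ → ℝ) (p₁s p₂s qs : ℝ)
    (hbdd : ∃ M : ℝ, ∀ t ∈ Set.Ico (0 : ℝ) T,
      |p₁ t| ≤ M ∧ |p₂ t| ≤ M ∧ |q₁ t| ≤ M ∧ |q₂ t| ≤ M)
    (hp₁ : Tendsto p₁ (nhdsWithin T (Set.Ico 0 T)) (nhds p₁s))
    (hp₂ : Tendsto p₂ (nhdsWithin T (Set.Ico 0 T)) (nhds p₂s))
    (hq₁ : Tendsto q₁ (nhdsWithin T (Set.Ico 0 T)) (nhds qs))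
    (hq₂ : Tendsto q₂ (nhdsWithin T (Set.Ico 0 T)) (nhds qs)) :
    Tendsto
      (fun t : ℝ => ∫ ξ : ℝ, (1 + ξ ^ 2) ^ (s - 2) *
        ‖(p₁ t : ℂ) * Complex.exp (-(Complex.I * ξ * q₁ t))
          + (p₂ t : ℂ) * Complex.exp (-(Complex.I * ξ * q₂ t))
          - ((p₁s + p₂s : ℝ) : ℂ) * Complex.exp (-(Complex.I * ξ * qs))‖ ^ 2)
      (nhdsWithin T (Set.Ico 0 T)) (nhds 0) := by
  obtain ⟨M, hM⟩ := hbdd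
  have hM0 : 0 ≤ M := le_trans (abs_nonneg _) (hM 0 ⟨le_refl 0, hT⟩).1
  set B : ℝ := (2 * M + |p₁s + p₂s|) ^ 2 with hB
  set l := nhdsWithin T (Set.Ico 0 T)
  have key :
      Tendsto
        (fun t : ℝ => ∫ ξ : ℝ, (1 + ξ ^ 2) ^ (s - 2) *
          ‖(p₁ t : ℂ) * Complex.exp (-(Complex.I * ξ * q₁ t))
            + (p₂ t : ℂ) * Complex.exp (-(Complex.I * ξ * q₂ t))
            - ((p₁s + p₂s : ℝ) : ℂ) * Complex.exp (-(Complex.I * ξ * qs))‖ ^ 2)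
        l (nhds (∫ _ : ℝ, (0 : ℝ))) := by
    apply tendsto_integral_filter_of_dominated_convergence
      (fun ξ : ℝ => (1 + ξ ^ 2) ^ (s - 2) * B)
    · filter_upwards with t
      apply Continuous.aestronglyMeasurable
      refine Continuous.mul ?_ ?_
      · exact (continuous_const.add (continuous_pow 2)).rpow_const
          (fun x => Or.inl (by show (1:ℝ) + x ^ 2 ≠ 0; positivity))
      · refine (continuous_norm.comp ?_).pow 2
        fun_prop
    · filter_upwards [self_mem_nhdsWithin] with t ht
      filter_upwards with ξ
      have h1 : (0:ℝ) < 1 + ξ ^ 2 := by positivity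
      rw [Real.norm_eq_abs, abs_mul, abs_of_pos (Real.rpow_pos_of_pos h1 _)]
      refine mul_le_mul_of_nonneg_left ?_ (Real.rpow_nonneg h1.le _)
      rw [_root_.abs_of_nonneg (pow_nonneg (norm_nonneg _) 2), hB]
      apply pow_le_pow_left₀ (norm_nonneg _)
      calc ‖_‖ ≤ ‖(p₁ t : ℂ) * Complex.exp (-(Complex.I * ξ * q₁ t))
            + (p₂ t : ℂ) * Complex.exp (-(Complex.I * ξ * q₂ t))‖
            + ‖((p₁s + p₂s : ℝ) : ℂ) * Complex.exp (-(Complex.I * ξ * qs))‖ :=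
          norm_sub_le _ _
        _ ≤ (‖(p₁ t : ℂ) * Complex.exp (-(Complex.I * ξ * q₁ t))‖
            + ‖(p₂ t : ℂ) * Complex.exp (-(Complex.I * ξ * q₂ t))‖)
            + ‖((p₁s + p₂s : ℝ) : ℂ) * Complex.exp (-(Complex.I * ξ * qs))‖ := by
          gcongr; exact norm_add_le _ _
        _ ≤ (M * 1 + M * 1) + |p₁s + p₂s| * 1 := by
          gcongr
          · rw [norm_mul, Complex.norm_real, Real.norm_eq_abs]
            gcongr
            · exact (hM t ht).1
            · rw [show -(Complex.I * ξ * (q₁ t)) = ((-(ξ * q₁ t)) : ℝ) * Complex.I by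
                push_cast; ring, Complex.norm_exp_ofReal_mul_I]
          · rw [norm_mul, Complex.norm_real, Real.norm_eq_abs]
            gcongr
            · exact (hM t ht).2.1
            · rw [show -(Complex.I * ξ * (q₂ t)) = ((-(ξ * q₂ t)) : ℝ) * Complex.I by
                push_cast; ring, Complex.norm_exp_ofReal_mul_I]
          · rw [norm_mul, Complex.norm_real, Real.norm_eq_abs]
            gcongr
            rw [show -(Complex.I * ξ * (qs : ℝ)) = ((-(ξ * qs)) : ℝ) * Complex.I by
              push_cast; ring, Complex.norm_exp_ofReal_mul_I]
        _ = 2 * M + |p₁s + p₂s| := by ring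
    · have h2 : (1 : ℝ) < 4 - 2 * s := by linarith
      have := (integrable_rpow_neg_one_add_norm_sq (E := ℝ) (μ := volume)
        (r := 4 - 2 * s) (by simpa using h2)).mul_const B
      refine this.congr (Eventually.of_forall fun ξ => ?_)
      simp [Real.norm_eq_abs, _root_.sq_abs, show (2 * s - 4) / 2 = s - 2 by ring]
    · filter_upwards with ξ
      have hcont : Continuous (fun v : ℝ × ℝ × ℝ × ℝ =>
          (1 + ξ ^ 2) ^ (s - 2) *
          ‖(v.1 : ℂ) * Complex.exp (-(Complex.I * ξ * v.2.2.1))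
            + (v.2.1 : ℂ) * Complex.exp (-(Complex.I * ξ * v.2.2.2))
            - ((p₁s + p₂s : ℝ) : ℂ) * Complex.exp (-(Complex.I * ξ * qs))‖ ^ 2) := by
        refine Continuous.mul continuous_const ?_
        refine (continuous_norm.comp ?_).pow 2
        fun_prop
      have htend : Tendsto (fun t => (p₁ t, p₂ t, q₁ t, q₂ t)) l
          (nhds (p₁s, p₂s, qs, qs)) := hp₁.prodMk_nhds (hp₂.prodMk_nhds
            (hq₁.prodMk_nhds hq₂))
      have := (hcont.tendsto (p₁s, p₂s, qs, qs)).comp htend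
      have hz : ((p₁s : ℂ) * Complex.exp (-(Complex.I * ξ * qs))
          + (p₂s : ℂ) * Complex.exp (-(Complex.I * ξ * qs))
          - ((p₁s : ℂ) + (p₂s : ℂ)) * Complex.exp (-(Complex.I * ξ * qs))) = 0 := by ring
      simpa [Function.comp_def, hz] using this
  simpa using key
end
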